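/- arXiv:2311.11253 — 3 statements merged into one kernel-verified Lean document; each statement's English description precedes it below -/
import Mathlib

section
/- Let n be a natural number, let x_0 < x_1 < ⋯ < x_n be distinct points in [a,b], and let f : ℝ → ℝ be (n+1)-times differentiable on [a,b]. If I_n is the unique polynomial of degree at most n with I_n(x_k) = f(x_k) for all k, then for every x ∈ [a,b] there exists ξ ∈ (a,b) such that f(x) − I_n(x) = f^{(n+1)}(ξ)/(n+1)! · ∏_{k=0}^{n} (x − x_k). -/
/-!
For `t` not a node, choose `c` so that `q = I + c·w`, with `w` the nodal polynomial, also
agrees with `f` at `t`. Then `f - q` vanishes at the `n + 2` points `t, x₀, …, xₙ`, so by Rolle's theorem applied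
`n + 1` times its `(n+1)`-st derivative vanishes at some `ξ`; as `q` is of degree `n + 1` with
leading coefficient `c`, this says `f^{(n+1)}(ξ) = (n+1)! c`.
-/

open Set Polynomial

theorem Polynomial.iterate_derivative_eq_C_of_natDegree_le {R : Type*} [Semiring R]
    {p : R[X]} {k : ℕ} (hp : p.natDegree ≤ k) :
    derivative^[k] p = C (k.factorial * p.coeff k) := by
  ext m
  rw [coeff_iterate_derivative, coeff_C]
  rcases m with _ | m
  · simp [Nat.descFactorial_self, nsmul_eq_mul]
  · simp [coeff_eq_zero_of_natDegree_lt (show p.natDegree < m + 1 + k by omega)]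

namespace Lagrange

open Finset

variable {R ι : Type*} [CommRing R] [Nontrivial R] {s : Finset ι} {v : ι → R} {p : R[X]}

theorem natDegree_add_C_mul_nodal_le (hp : p.natDegree < #s) (c : R) :
    (p + C c * nodal s v).natDegree ≤ #s :=
  (natDegree_add_le _ _).trans
    (max_le hp.le ((natDegree_C_mul_le _ _).trans natDegree_nodal.le))

theorem coeff_add_C_mul_nodal (hp : p.natDegree < #s) (c : R) :
    (p + C c * nodal s v).coeff #s = c := by
  rw [coeff_add, coeff_C_mul, coeff_eq_zero_of_natDegree_lt hp, ← natDegree_nodal (v := v),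
    nodal_monic.coeff_natDegree, zero_add, mul_one]

end Lagrange

theorem iteratedDerivWithin_sub_eval_eqOn {𝕜 : Type*} [NontriviallyNormedField 𝕜]
    {s : Set 𝕜} (hs : UniqueDiffOn 𝕜 s) {f : 𝕜 → 𝕜} (p : 𝕜[X])
    {k : ℕ} (hf : ∀ i < k, DifferentiableOn 𝕜 (iteratedDerivWithin i f s) s) :
    EqOn (iteratedDerivWithin k (fun y => f y - p.eval y) s)
      (fun y => iteratedDerivWithin k f s y - (derivative^[k] p).eval y) s := by
  induction k with
  | zero => intro y _; simp
  | succ k ih =>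
    intro z hz
    replace ih := ih fun i hi => hf i (by omega)
    rw [iteratedDerivWithin_succ, derivWithin_congr ih (ih hz),
      derivWithin_fun_sub (hf k k.lt_succ_self z hz)
        (derivative^[k] p).differentiableAt.differentiableWithinAt,
      Polynomial.derivWithin _ (hs z hz), Function.iterate_succ_apply', iteratedDerivWithin_succ]

/-- Rolle's theorem needs no differentiability: at an interior extremum where `g` is not
differentiable, `deriv g` takes the junk value `0`. -/
theorem exists_derivWithin_eq_zero_of_ordConnected {s : Set ℝ} [s.OrdConnected]
    {g : ℝ → ℝ} (hg : ContinuousOn g s) {y₀ y₁ : ℝ} (hy : y₀ < y₁)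
    (hy₀ : y₀ ∈ s) (hy₁ : y₁ ∈ s) (hgy : g y₀ = g y₁) : ∃ z ∈ Ioo y₀ y₁, derivWithin g s z = 0 := by
  have hsub : Icc y₀ y₁ ⊆ s := Set.Icc_subset s hy₀ hy₁
  obtain ⟨z, hz, hgz⟩ := exists_deriv_eq_zero hy (hg.mono hsub) hgy
  have hs : s ∈ nhds z := Filter.mem_of_superset (Icc_mem_nhds hz.1 hz.2) hsub
  exact ⟨z, hz, by rwa [derivWithin_of_mem_nhds hs]⟩

theorem exists_iteratedDerivWithin_eq_zero_of_strictMono {s : Set ℝ} [s.OrdConnected] :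
    ∀ (m : ℕ) {g : ℝ → ℝ}, (∀ i < m + 1, ContinuousOn (iteratedDerivWithin i g s) s) →
      ∀ {y : Fin (m + 2) → ℝ}, StrictMono y → (∀ j, y j ∈ s) → (∀ j, g (y j) = 0) →
      ∃ ξ ∈ Ioo (y 0) (y (Fin.last _)), iteratedDerivWithin (m + 1) g s ξ = 0
  | 0, g, hg, y, hy, hys, hgy => by
    simpa [iteratedDerivWithin_one] using exists_derivWithin_eq_zero_of_ordConnected
      (by simpa using hg 0 one_pos) (hy (show (0 : Fin 2) < Fin.last 1 by decide))
      (hys 0) (hys _) ((hgy 0).trans (hgy _).symm)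
  | m + 1, g, hg, y, hy, hys, hgy => by
    choose z hz hgz using fun j : Fin (m + 2) => exists_derivWithin_eq_zero_of_ordConnected
      (by simpa using hg 0 (by omega)) (hy j.castSucc_lt_succ) (hys _) (hys _)
      ((hgy _).trans (hgy _).symm)
    have hzs : ∀ j, z j ∈ s := fun j =>
      Set.Icc_subset s (hys _) (hys _) (Ioo_subset_Icc_self (hz j))
    have hzmono : StrictMono z := fun i j hij =>
      ((hz i).2.trans_le (hy.monotone (Fin.succ_le_castSucc_iff.2 hij))).trans (hz j).1
    have hg' : ∀ i < m + 1, ContinuousOn (iteratedDerivWithin i (derivWithin g s) s) s :=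
      fun i hi => by simpa only [iteratedDerivWithin_succ'] using hg (i + 1) (by omega)
    obtain ⟨ξ, hξ, hgξ⟩ :=
      exists_iteratedDerivWithin_eq_zero_of_strictMono m hg' hzmono hzs hgz
    refine ⟨ξ, ⟨(hz 0).1.trans hξ.1, hξ.2.trans (hz _).2⟩, ?_⟩
    rwa [iteratedDerivWithin_succ']

theorem exists_iteratedDerivWithin_eq_zero_of_card {s : Set ℝ} [s.OrdConnected] {m : ℕ}
    {g : ℝ → ℝ} (hg : ∀ i < m + 1, ContinuousOn (iteratedDerivWithin i g s) s)
    {Z : Finset ℝ} (hZ : Z.card = m + 2) (hZs : ↑Z ⊆ s) (hgZ : ∀ z ∈ Z, g z = 0) :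
    ∃ ξ ∈ interior s, iteratedDerivWithin (m + 1) g s ξ = 0 := by
  let e := Z.orderIsoOfFin hZ
  obtain ⟨ξ, hξ, hgξ⟩ := exists_iteratedDerivWithin_eq_zero_of_strictMono m hg
    (y := fun j => e j) e.strictMono (fun j => hZs (e j).2) (fun j => hgZ _ (e j).2)
  have hsub : Icc (e 0 : ℝ) (e (Fin.last _)) ⊆ s :=
    Set.Icc_subset s (hZs (e _).2) (hZs (e _).2)
  exact ⟨ξ, interior_mono hsub (by rwa [interior_Icc]), hgξ⟩

/-- The mean value theorem for divided differences. -/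
theorem exists_iteratedDerivWithin_eq_factorial_mul_coeff {s : Set ℝ} [s.OrdConnected]
    (hs : UniqueDiffOn ℝ s) {m : ℕ} {f : ℝ → ℝ}
    (hf : ∀ i < m + 1, DifferentiableOn ℝ (iteratedDerivWithin i f s) s)
    {q : ℝ[X]} (hq : q.natDegree ≤ m + 1)
    {Z : Finset ℝ} (hZ : Z.card = m + 2) (hZs : ↑Z ⊆ s) (hfq : ∀ z ∈ Z, f z = q.eval z) :
    ∃ ξ ∈ interior s,
      iteratedDerivWithin (m + 1) f s ξ = (m + 1).factorial * q.coeff (m + 1) := by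
  have hg := fun k (hk : k ≤ m + 1) =>
    iteratedDerivWithin_sub_eval_eqOn hs q (k := k) fun i hi => hf i (by omega)
  obtain ⟨ξ, hξ, hgξ⟩ := exists_iteratedDerivWithin_eq_zero_of_card
    (g := fun y => f y - q.eval y)
    (fun i hi => ((hf i hi).continuousOn.sub (derivative^[i] q).continuous.continuousOn).congr
      (hg i hi.le))
    hZ hZs (fun z hz => sub_eq_zero.2 (hfq z hz))
  refine ⟨ξ, hξ, ?_⟩
  rw [hg (m + 1) le_rfl (interior_subset hξ)] at hgξ
  simpa only [iterate_derivative_eq_C_of_natDegree_le hq, eval_C, sub_eq_zero] using hgξ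

/-- Lagrange interpolation error formula: if `x_0 < ⋯ < x_n` lie in `[a,b]`,
`f` is `(n+1)`-times differentiable on `[a,b]`, and `I_n` is the polynomial of degree at
most `n` interpolating `f` at the `x_k`, then for every `x ∈ [a,b]` there is `ξ ∈ (a,b)`
with `f(x) − I_n(x) = f^{(n+1)}(ξ)/(n+1)! · ∏_{k=0}^{n} (x − x_k)`. -/
theorem lagrange_interpolation_error (n : ℕ) (a b : ℝ) (hab : a < b)
    (x : Fin (n + 1) → ℝ) (hx : StrictMono x) (hxab : ∀ k, x k ∈ Set.Icc a b)
    (f : ℝ → ℝ)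
    (hf : ∀ i < n + 1,
      DifferentiableOn ℝ (iteratedDerivWithin i f (Set.Icc a b)) (Set.Icc a b))
    (I : Polynomial ℝ) (hIdeg : I.degree ≤ n) (hI : ∀ k, I.eval (x k) = f (x k)) :
    ∀ t ∈ Set.Icc a b, ∃ ξ ∈ Set.Ioo a b,
      f t - I.eval t =
        iteratedDerivWithin (n + 1) f (Set.Icc a b) ξ / (Nat.factorial (n + 1)) *
          ∏ k : Fin (n + 1), (t - x k) := by
  intro t ht
  set w := Lagrange.nodal Finset.univ x
  have hwt : w.eval t = ∏ k, (t - x k) := Lagrange.eval_nodal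
  by_cases hnode : ∃ k, t = x k
  · obtain ⟨k, rfl⟩ := hnode
    refine ⟨(a + b) / 2, ⟨by linarith, by linarith⟩, ?_⟩
    rw [hI k, sub_self, ← hwt, Lagrange.eval_nodal_at_node (Finset.mem_univ k), mul_zero]
  push Not at hnode
  have hwt0 : w.eval t ≠ 0 := Lagrange.eval_nodal_not_at_node fun k _ => hnode k
  have hIdeg' : I.natDegree < (Finset.univ : Finset (Fin (n + 1))).card := by
    simpa using Nat.lt_succ_of_le (natDegree_le_iff_degree_le.mpr hIdeg)
  set c := (f t - I.eval t) / w.eval t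
  have hcoeff : (I + C c * w).coeff (n + 1) = c := by
    simpa using Lagrange.coeff_add_C_mul_nodal hIdeg' c
  have hZ : (insert t (Finset.univ.image x)).card = n + 2 := by
    rw [Finset.card_insert_of_notMem (by simpa [eq_comm] using hnode),
      Finset.card_image_of_injective _ hx.injective, Finset.card_univ, Fintype.card_fin]
  have hfq : ∀ z ∈ insert t (Finset.univ.image x), f z = (I + C c * w).eval z := by
    simp only [Finset.mem_insert, Finset.mem_image, Finset.mem_univ, true_and]
    rintro z (rfl | ⟨k, -, rfl⟩)
    · simp [c, div_mul_cancel₀ _ hwt0]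
    · simp [w, Lagrange.eval_nodal_at_node, hI]
  obtain ⟨ξ, hξ, hfξ⟩ := exists_iteratedDerivWithin_eq_factorial_mul_coeff
    (uniqueDiffOn_Icc hab) hf (by simpa using Lagrange.natDegree_add_C_mul_nodal_le hIdeg' c) hZ
    (by simp [Set.insert_subset_iff, Set.range_subset_iff, ht, hxab]) hfq
  refine ⟨ξ, by rwa [interior_Icc] at hξ, ?_⟩
  rw [hfξ, hcoeff, mul_div_cancel_left₀ _ (by positivity), ← hwt, div_mul_cancel₀ _ hwt0]
end

section
/- Let n be a natural number and let f : ℝ → ℝ be (n+1)-times differentiable on [-1,1] with |f^{(n+1)}(x)| ≤ M_{n+1} for all x ∈ [-1,1]. If I_n is the polynomial of degree at most n interpolating f at the Chebyshev nodes x_k = cos((2k+1)π/(2n+2)), k = 0,…,n, then sup_{x ∈ [-1,1]} |f(x) − I_n(x)| ≤ M_{n+1} / (2^n (n+1)!). -/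
/-!
For `t` not a node, choose `c` so that `g = f - I - c ∏ (X - xₖ)` vanishes at `t`. Then `g` has
`n + 2` zeros in `[-1, 1]`, so by Rolle's theorem applied `n + 1` times `g⁽ⁿ⁺¹⁾` vanishes at some
`ξ`, which forces `c = f⁽ⁿ⁺¹⁾(ξ) / (n + 1)!`. The Chebyshev nodes are the zeros of
`T_{n+1} = 2ⁿ ∏ (X - xₖ)`, and `|T_{n+1}| ≤ 1` on `[-1, 1]`, so `|∏ (t - xₖ)| ≤ 2⁻ⁿ`.
-/

open Real Set Polynomial
open scoped Nat

theorem exists_strictMono_derivWithin_eq_zero {a b : ℝ} {m : ℕ} {g : ℝ → ℝ} {p : Fin (m + 2) → ℝ}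
    (hp : StrictMono p) (hpI : ∀ i, p i ∈ Icc a b) (hg : ∀ i, g (p i) = 0)
    (hgc : ContinuousOn g (Icc a b)) :
    ∃ q : Fin (m + 1) → ℝ,
      StrictMono q ∧ ∀ i, q i ∈ Ioo a b ∧ derivWithin g (Icc a b) (q i) = 0 := by
  have hRolle : ∀ i : Fin (m + 1), ∃ c ∈ Ioo (p i.castSucc) (p i.succ), deriv g c = 0 := fun i =>
    exists_deriv_eq_zero (hp Fin.castSucc_lt_succ)
      (hgc.mono (Icc_subset_Icc (hpI _).1 (hpI _).2)) ((hg _).trans (hg _).symm)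
  choose q hqp hq using hRolle
  have hqI : ∀ i, q i ∈ Ioo a b := fun i =>
    ⟨(hpI _).1.trans_lt (hqp i).1, (hqp i).2.trans_le (hpI _).2⟩
  refine ⟨q, fun i j hij => ?_, fun i => ⟨hqI i, ?_⟩⟩
  · calc q i < p i.succ := (hqp i).2
      _ ≤ p j.castSucc := hp.monotone (Fin.succ_le_castSucc_iff.mpr hij)
      _ < q j := (hqp j).1
  · rw [derivWithin_of_mem_nhds (Icc_mem_nhds (hqI i).1 (hqI i).2), hq]

theorem exists_iteratedDerivWithin_eq_zero_of_strictMono_s3 {a b : ℝ} :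
    ∀ {m : ℕ} {g : ℝ → ℝ} {p : Fin (m + 1) → ℝ}, StrictMono p → (∀ i, p i ∈ Icc a b) →
      (∀ i, g (p i) = 0) →
      (∀ i < m, DifferentiableOn ℝ (iteratedDerivWithin i g (Icc a b)) (Icc a b)) →
      ∃ ξ ∈ Icc a b, iteratedDerivWithin m g (Icc a b) ξ = 0
  | 0, _, p, _, hpI, hg, _ => ⟨p 0, hpI 0, by simpa using hg 0⟩
  | m + 1, g, p, hp, hpI, hg, hd => by
    have hgc : ContinuousOn g (Icc a b) := by
      simpa using (hd 0 m.succ_pos).continuousOn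
    obtain ⟨q, hq, hqz⟩ := exists_strictMono_derivWithin_eq_zero hp hpI hg hgc
    obtain ⟨ξ, hξ, hξz⟩ := exists_iteratedDerivWithin_eq_zero_of_strictMono_s3 hq
      (fun i => Ioo_subset_Icc_self (hqz i).1) (fun i => (hqz i).2)
      (fun i hi => by simpa [iteratedDerivWithin_succ'] using hd (i + 1) (by omega))
    exact ⟨ξ, hξ, by rwa [iteratedDerivWithin_succ']⟩

theorem iteratedDerivWithin_sub_eval {s : Set ℝ} (hs : UniqueDiffOn ℝ s) {f : ℝ → ℝ} (Q : ℝ[X]) :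
    ∀ {n : ℕ}, (∀ i < n, DifferentiableOn ℝ (iteratedDerivWithin i f s) s) → ∀ x ∈ s,
      iteratedDerivWithin n (fun y => f y - Q.eval y) s x =
        iteratedDerivWithin n f s x - (derivative^[n] Q).eval x
  | 0, _, x, _ => by simp
  | n + 1, hf, x, hx => by
    have ih := iteratedDerivWithin_sub_eval hs Q (n := n) (fun i hi => hf i (by omega))
    rw [iteratedDerivWithin_succ, iteratedDerivWithin_succ, derivWithin_congr ih (ih x hx),
      derivWithin_fun_sub (hf n n.lt_succ_self x hx)
        (Polynomial.differentiableAt _).differentiableWithinAt,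
      Polynomial.derivWithin _ (hs x hx), ← Function.iterate_succ_apply' derivative]

theorem iterate_derivative_add_C_mul_prod_X_sub_C {n : ℕ} {I : ℝ[X]} (hIdeg : I.degree ≤ n) (c : ℝ)
    {S : Finset ℝ} (hS : S.card = n + 1) :
    derivative^[n + 1] (I + C c * ∏ x ∈ S, (X - C x)) = C (c * (n + 1)!) := by
  rw [← Module.End.pow_apply, map_add, Module.End.pow_apply, Module.End.pow_apply,
    iterate_derivative_eq_zero_of_degree_lt (hIdeg.trans_lt (by exact_mod_cast n.lt_succ_self)),
    iterate_derivative_C_mul, ← hS, iterate_derivative_prod_X_sub_C le_rfl]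
  simp [Finset.powersetCard_zero]

theorem exists_sub_eval_eq_iteratedDerivWithin_mul_prod {a b : ℝ} (hab : a < b) {n : ℕ}
    {f : ℝ → ℝ} (hf : ∀ i < n + 1, DifferentiableOn ℝ (iteratedDerivWithin i f (Icc a b)) (Icc a b))
    {S : Finset ℝ} (hS : (S : Set ℝ) ⊆ Icc a b) (hcard : S.card = n + 1)
    {I : ℝ[X]} (hIdeg : I.degree ≤ n) (hI : ∀ x ∈ S, I.eval x = f x) {t : ℝ} (ht : t ∈ Icc a b) :
    ∃ ξ ∈ Icc a b, f t - I.eval t =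
      iteratedDerivWithin (n + 1) f (Icc a b) ξ / (n + 1)! * ∏ x ∈ S, (t - x) := by
  by_cases htS : t ∈ S
  · exact ⟨t, ht, by rw [hI t htS, sub_self, Finset.prod_eq_zero htS (sub_self t), mul_zero]⟩
  have hPt : (∏ x ∈ S, (X - C x)).eval t = ∏ x ∈ S, (t - x) := by simp [eval_prod]
  have hPt0 : ∏ x ∈ S, (t - x) ≠ 0 :=
    Finset.prod_ne_zero_iff.mpr fun x hx => sub_ne_zero.mpr (ne_of_mem_of_not_mem hx htS).symm
  set c := (f t - I.eval t) / ∏ x ∈ S, (t - x)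
  set Q := I + C c * ∏ x ∈ S, (X - C x)
  have hQS : ∀ x ∈ insert t S, f x - Q.eval x = 0 := by
    intro x hx
    rcases Finset.mem_insert.mp hx with rfl | hx
    · simp only [Q, eval_add, eval_mul, eval_C, hPt, c]
      field_simp
      ring
    · simp [Q, eval_prod, Finset.prod_eq_zero hx, hI x hx]
  have hcard' : (insert t S).card = n + 2 := by rw [Finset.card_insert_of_notMem htS, hcard]
  have hIcc : ∀ x ∈ insert t S, x ∈ Icc a b := fun x hx =>
    (Finset.mem_insert.mp hx).elim (· ▸ ht) (hS ·)
  have hsub : ∀ i < n + 1, DifferentiableOn ℝ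
      (iteratedDerivWithin i (fun y => f y - Q.eval y) (Icc a b)) (Icc a b) := fun i hi =>
    ((hf i hi).sub (derivative^[i] Q).differentiableOn).congr fun x hx =>
      iteratedDerivWithin_sub_eval (uniqueDiffOn_Icc hab) Q (fun j hj => hf j (hj.trans hi)) x hx
  obtain ⟨ξ, hξ, hξ0⟩ := exists_iteratedDerivWithin_eq_zero_of_strictMono_s3
    ((insert t S).orderEmbOfFin hcard').strictMono
    (fun i => hIcc _ ((insert t S).orderEmbOfFin_mem hcard' i))
    (fun i => hQS _ ((insert t S).orderEmbOfFin_mem hcard' i)) hsub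
  rw [iteratedDerivWithin_sub_eval (uniqueDiffOn_Icc hab) Q hf ξ hξ,
    iterate_derivative_add_C_mul_prod_X_sub_C hIdeg c hcard, eval_C, sub_eq_zero] at hξ0
  refine ⟨ξ, hξ, ?_⟩
  rw [hξ0, mul_div_cancel_right₀ _ (by positivity), div_mul_cancel₀ _ hPt0]

open Finset in
noncomputable def chebyshevNodes (n : ℕ) : Finset ℝ :=
  (range n).image fun k : ℕ => cos ((2 * k + 1) * π / (2 * n))

section ChebyshevNodes

open Finset Polynomial.Chebyshev

theorem roots_T_real_eq_chebyshevNodes (n : ℕ) : (T ℝ n).roots = (chebyshevNodes n).val :=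
  roots_T_real n

theorem card_chebyshevNodes (n : ℕ) : #(chebyshevNodes n) = n := by
  rw [chebyshevNodes, card_image_of_injOn ((range n).nodup_map_iff_injOn.mp (roots_T_real_nodup n)),
    card_range]

theorem chebyshevNodes_subset_Icc (n : ℕ) : (chebyshevNodes n : Set ℝ) ⊆ Icc (-1) 1 := by
  intro x hx
  obtain ⟨k, -, rfl⟩ := mem_image.mp hx
  exact cos_mem_Icc _

theorem C_two_pow_mul_prod_X_sub_C_chebyshevNodes (n : ℕ) :
    C (2 ^ n) * ∏ x ∈ chebyshevNodes (n + 1), (X - C x) = T ℝ (n + 1) := by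
  have hroots : Multiset.card (T ℝ (n + 1 : ℕ)).roots = (T ℝ (n + 1 : ℕ)).natDegree := by
    rw [roots_T_real_eq_chebyshevNodes, natDegree_T, Int.natAbs_natCast]
    exact card_chebyshevNodes (n + 1)
  have h := C_leadingCoeff_mul_prod_multiset_X_sub_C hroots
  rw [leadingCoeff_T, roots_T_real_eq_chebyshevNodes, Int.natAbs_natCast, Nat.add_sub_cancel] at h
  exact_mod_cast h

theorem abs_prod_sub_chebyshevNodes_le {n : ℕ} {t : ℝ} (ht : |t| ≤ 1) :
    |∏ x ∈ chebyshevNodes (n + 1), (t - x)| ≤ 1 / 2 ^ n := by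
  have hT := abs_eval_T_real_le_one (n + 1) ht
  rw [← C_two_pow_mul_prod_X_sub_C_chebyshevNodes, eval_mul, eval_C, eval_prod, abs_mul,
    abs_of_pos (by positivity)] at hT
  simp only [eval_sub, eval_X, eval_C] at hT
  rw [le_div_iff₀' (by positivity)]
  exact hT

end ChebyshevNodes

/-- Chebyshev interpolation error bound: if `f` is `(n+1)`-times differentiable on `[-1,1]`
with `|f^{(n+1)}| ≤ M` there, and `I_n` is the polynomial of degree at most `n`
interpolating `f` at the Chebyshev nodes `x_k = cos((2k+1)π/(2n+2))`, then
`sup_{x ∈ [-1,1]} |f(x) − I_n(x)| ≤ M / (2^n (n+1)!)`. -/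
theorem chebyshev_interpolation_error_bound (n : ℕ) (f : ℝ → ℝ) (M : ℝ)
    (hf : ∀ i < n + 1,
      DifferentiableOn ℝ (iteratedDerivWithin i f (Set.Icc (-1 : ℝ) 1)) (Set.Icc (-1 : ℝ) 1))
    (hM : ∀ t ∈ Set.Icc (-1 : ℝ) 1,
      |iteratedDerivWithin (n + 1) f (Set.Icc (-1 : ℝ) 1) t| ≤ M)
    (I : Polynomial ℝ) (hIdeg : I.degree ≤ n)
    (hI : ∀ k : ℕ, k ≤ n →
      I.eval (Real.cos ((2 * k + 1) * Real.pi / (2 * n + 2))) =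
        f (Real.cos ((2 * k + 1) * Real.pi / (2 * n + 2)))) :
    ∀ t ∈ Set.Icc (-1 : ℝ) 1,
      |f t - I.eval t| ≤ M / (2 ^ n * Nat.factorial (n + 1)) := by
  intro t ht
  have hnodes : ∀ x ∈ chebyshevNodes (n + 1), I.eval x = f x := by
    intro x hx
    obtain ⟨k, hk, rfl⟩ := Finset.mem_image.mp hx
    have hden : 2 * ((n + 1 : ℕ) : ℝ) = 2 * n + 2 := by push_cast; ring
    rw [hden]
    exact hI k (Nat.lt_succ_iff.mp (Finset.mem_range.mp hk))
  obtain ⟨ξ, hξ, herr⟩ := exists_sub_eval_eq_iteratedDerivWithin_mul_prod (by norm_num) hf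
    (chebyshevNodes_subset_Icc _) (card_chebyshevNodes _) hIdeg hnodes ht
  have hM0 : 0 ≤ M := (abs_nonneg _).trans (hM ξ hξ)
  rw [herr, abs_mul, abs_div, Nat.abs_cast]
  calc _ ≤ M / (n + 1)! * (1 / 2 ^ n) :=
        mul_le_mul (by gcongr; exact hM ξ hξ) (abs_prod_sub_chebyshevNodes_le (abs_le.mpr ht))
          (abs_nonneg _) (by positivity)
    _ = M / (2 ^ n * (n + 1)!) := by field_simp
end

section
/- Let f(x) = 1/(1 + 25x²) be the Runge function on [-1,1], and for each n let I_n be the polynomial of degree at most n interpolating f at the Chebyshev nodes x_k = cos((2k+1)π/(2n+2)), k = 0,…,n. Then I_n converges uniformly to f on [-1,1], i.e. sup_{x ∈ [-1,1]} |f(x) − I_n(x)| → 0 as n → ∞. -/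
/-!
Let `z = i/a` be a pole of `1/(1 + a²x²)` and `p` the interpolant at the zeros of `T_{n+1}`.
The polynomial `E = 1 - (1 + a²X²) p` vanishes at these zeros and has degree at most `n + 2`,
so `E = T_{n+1} R` with `R` linear, while `E(z) = 1`. A real linear polynomial is bounded on
`[-1,1]` by a multiple of its modulus at `z`, and `|T_{n+1}| ≤ 1` there, so the interpolation
error `E(x)/(1 + a²x²)` is `O(1/|T_{n+1}(z)|)`. Finally `z = cosh(arsinh(1/a) + iπ/2)`, hence
`|T_m(z)| = |cosh(m (arsinh(1/a) + iπ/2))| ≥ sinh(m arsinh(1/a)) → ∞`.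
-/

open Set Polynomial Filter Real

theorem Polynomial.Splits.dvd_of_forall_isRoot {K : Type*} [Field K] {f g : K[X]}
    (hf : f.Splits) (hf0 : f ≠ 0) (hnd : f.roots.Nodup) (hg : ∀ x ∈ f.roots, g.IsRoot x) :
    f ∣ g := by
  rcases eq_or_ne g 0 with rfl | hg0
  · exact dvd_zero f
  refine hf.dvd_of_roots_le_roots hf0 ((Multiset.le_iff_subset hnd).2 fun x hx => ?_)
  exact (mem_roots hg0).2 (hg x hx)

theorem Complex.sinh_re_le_norm_cosh (w : ℂ) : Real.sinh w.re ≤ ‖cosh w‖ := by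
  have h := norm_sub_norm_le (exp w) (-exp (-w))
  rw [norm_neg, sub_neg_eq_add, ← two_cosh, norm_mul, Complex.norm_exp, Complex.norm_exp,
    Complex.neg_re, Complex.norm_two] at h
  rw [Real.sinh_eq]
  linarith

theorem Complex.cosh_arsinh_add_pi_div_two_mul_I (y : ℝ) :
    cosh (arsinh y + π / 2 * I) = y * I := by
  rw [cosh_add, cosh_mul_I, sinh_mul_I, ← ofReal_sinh, Real.sinh_arsinh]
  simp [Complex.cos_pi_div_two, Complex.sin_pi_div_two]

namespace Polynomial

theorem abs_eval_le_of_natDegree_le_one {R : ℝ[X]} (hR : R.natDegree ≤ 1) {y : ℝ}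
    (hy : 0 < y) {x : ℝ} (hx : |x| ≤ 1) :
    |R.eval x| ≤ (1 + y⁻¹) * ‖aeval (y * Complex.I) R‖ := by
  rw [eq_X_add_C_of_natDegree_le_one hR]
  set a := R.coeff 1
  set b := R.coeff 0
  set w : ℂ := aeval (y * Complex.I) (C a * X + C b)
  have hb : |b| ≤ ‖w‖ := by simpa [w] using Complex.abs_re_le_norm w
  have ha : |a| * y ≤ ‖w‖ := by
    simpa [w, abs_mul, abs_of_pos hy] using Complex.abs_im_le_norm w
  have hax : |a * x| ≤ |a| := by
    rw [abs_mul]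
    exact mul_le_of_le_one_right (abs_nonneg a) hx
  calc |eval x (C a * X + C b)| = |a * x + b| := by simp
    _ ≤ |a| + |b| := (abs_add_le _ _).trans (by linarith)
    _ ≤ y⁻¹ * ‖w‖ + ‖w‖ := by
      gcongr
      rwa [inv_mul_eq_div, le_div_iff₀ hy]
    _ = (1 + y⁻¹) * ‖w‖ := by ring

theorem abs_eval_mul_norm_aeval_le_of_dvd {q E : ℝ[X]}
    (hq : ∀ x, |x| ≤ 1 → |q.eval x| ≤ 1) (hdvd : q ∣ E) (hdeg : E.natDegree ≤ q.natDegree + 1)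
    {y : ℝ} (hy : 0 < y) {x : ℝ} (hx : |x| ≤ 1) :
    |E.eval x| * ‖aeval (y * Complex.I) q‖ ≤ (1 + y⁻¹) * ‖aeval (y * Complex.I) E‖ := by
  obtain ⟨R, rfl⟩ := hdvd
  rcases eq_or_ne (q * R) 0 with h | h
  · simp [h]
  have hR : R.natDegree ≤ 1 := by
    rw [natDegree_mul (left_ne_zero_of_mul h) (right_ne_zero_of_mul h)] at hdeg
    omega
  rw [eval_mul, map_mul, norm_mul, abs_mul]
  calc |q.eval x| * |R.eval x| * ‖aeval (y * Complex.I) q‖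
      ≤ 1 * ((1 + y⁻¹) * ‖aeval (y * Complex.I) R‖) * ‖aeval (y * Complex.I) q‖ := by
        gcongr
        exacts [hq x hx, abs_eval_le_of_natDegree_le_one hR hy hx]
    _ = (1 + y⁻¹) * (‖aeval (y * Complex.I) q‖ * ‖aeval (y * Complex.I) R‖) := by ring

namespace Chebyshev

theorem T_real_succ_dvd_of_forall_eval_eq_zero {n : ℕ} {g : ℝ[X]}
    (hg : ∀ k ≤ n, g.eval (cos ((2 * k + 1) * π / (2 * n + 2))) = 0) :
    T ℝ (n + 1) ∣ g := by
  have hT0 : T ℝ (n + 1) ≠ 0 := by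
    rw [← degree_ne_bot, degree_T]
    exact WithBot.natCast_ne_bot _
  have hsplit : (T ℝ (n + 1)).Splits := by
    rw [splits_iff_card_roots, natDegree_T, ← Nat.cast_succ, roots_T_real, Finset.card_val,
      Finset.card_image_of_injOn ((Finset.range _).nodup_map_iff_injOn.1 (roots_T_real_nodup _)),
      Finset.card_range, Int.natAbs_natCast]
  have hroots : (T ℝ (n + 1)).roots =
      ((Finset.range (n + 1)).image fun k : ℕ => cos ((2 * k + 1) * π / (2 * n + 2))).val := by
    simpa [mul_add] using roots_T_real (n + 1)
  refine hsplit.dvd_of_forall_isRoot hT0 (hroots ▸ Finset.nodup _) fun x hx => ?_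
  rw [hroots, Finset.mem_val, Finset.mem_image] at hx
  obtain ⟨k, hk, rfl⟩ := hx
  exact hg k (Nat.lt_succ_iff.1 (Finset.mem_range.1 hk))

theorem tendsto_norm_eval_T_complex_mul_I {y : ℝ} (hy : 0 < y) :
    Tendsto (fun m : ℕ => ‖(T ℂ m).eval (y * Complex.I)‖) atTop atTop := by
  have ha : 0 < arsinh y := arsinh_pos_iff.2 hy
  refine tendsto_atTop_mono (fun m => ?_)
    ((tendsto_natCast_atTop_atTop (R := ℝ)).atTop_mul_const ha)
  rw [← Complex.cosh_arsinh_add_pi_div_two_mul_I, T_complex_cosh]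
  calc (m : ℝ) * arsinh y ≤ Real.sinh (m * arsinh y) := Real.self_le_sinh_iff.2 (by positivity)
    _ ≤ _ := by
      convert Complex.sinh_re_le_norm_cosh _ using 2
      simp

end Chebyshev

end Polynomial

open Polynomial.Chebyshev

theorem abs_runge_sub_eval_le {a : ℝ} (ha : 0 < a) {n : ℕ} {p : ℝ[X]} (hdeg : p.degree ≤ n)
    (hinterp : ∀ k ≤ n, p.eval (cos ((2 * k + 1) * π / (2 * n + 2))) =
      1 / (1 + a ^ 2 * cos ((2 * k + 1) * π / (2 * n + 2)) ^ 2))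
    {x : ℝ} (hx : |x| ≤ 1) :
    |1 / (1 + a ^ 2 * x ^ 2) - p.eval x| ≤
      (1 + a) / ‖aeval ((a⁻¹ : ℝ) * Complex.I) (T ℝ (n + 1))‖ := by
  set z : ℂ := (a⁻¹ : ℝ) * Complex.I
  set E : ℝ[X] := 1 - (1 + Polynomial.C (a ^ 2) * X ^ 2) * p
  have hE_eval (t : ℝ) : E.eval t = 1 - (1 + a ^ 2 * t ^ 2) * p.eval t := by simp [E]
  have hdvd : T ℝ (n + 1) ∣ E := T_real_succ_dvd_of_forall_eval_eq_zero fun k hk => by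
    rw [hE_eval, hinterp k hk, mul_one_div_cancel (by positivity), sub_self]
  have hE_pole : aeval z E = 1 := by
    have hz : (1 : ℂ) + (a : ℂ) ^ 2 * z ^ 2 = 0 := by simp [z, mul_pow, ha.ne']
    simp [E, hz]
  have hdegE : E.natDegree ≤ (T ℝ (n + 1)).natDegree + 1 := by
    have hp : p.natDegree ≤ n := natDegree_le_of_degree_le hdeg
    have hq : (1 + Polynomial.C (a ^ 2) * X ^ 2 : ℝ[X]).natDegree ≤ 2 := by compute_degree
    rw [natDegree_T, show ((n : ℤ) + 1).natAbs = n + 1 by omega]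
    refine (natDegree_sub_le _ _).trans (max_le (by simp) (natDegree_mul_le.trans ?_))
    omega
  have hTz : aeval z (T ℝ (n + 1)) ≠ 0 := fun h => by
    simpa [h, hE_pole] using map_dvd (aeval z) hdvd
  have key := abs_eval_mul_norm_aeval_le_of_dvd (fun t ht => abs_eval_T_real_le_one _ ht) hdvd
    hdegE (inv_pos.2 ha) hx
  rw [hE_pole, norm_one, mul_one, inv_inv, ← le_div_iff₀ (norm_pos_iff.2 hTz)] at key
  have hpos : 0 < 1 + a ^ 2 * x ^ 2 := by positivity
  calc |1 / (1 + a ^ 2 * x ^ 2) - p.eval x| = |E.eval x| / (1 + a ^ 2 * x ^ 2) := by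
        rw [hE_eval, ← abs_of_pos hpos, ← abs_div, abs_of_pos hpos]
        congr 1
        field_simp
    _ ≤ |E.eval x| := div_le_self (abs_nonneg _) (by nlinarith)
    _ ≤ _ := key

/-- The polynomial interpolants of the Runge function `f(x) = 1/(1 + 25x²)` at the
Chebyshev nodes `x_k = cos((2k+1)π/(2n+2))`, `k = 0,…,n`, converge uniformly to `f` on
`[-1,1]`: the sup-error tends to `0`. -/
theorem runge_chebyshev_convergence
    (f : ℝ → ℝ) (hf : ∀ x : ℝ, f x = 1 / (1 + 25 * x ^ 2))
    (I : ℕ → Polynomial ℝ)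
    (hdeg : ∀ n : ℕ, (I n).degree ≤ n)
    (hinterp : ∀ n : ℕ, ∀ k : ℕ, k ≤ n →
      (I n).eval (Real.cos ((2 * k + 1) * Real.pi / (2 * n + 2))) =
        f (Real.cos ((2 * k + 1) * Real.pi / (2 * n + 2)))) :
    Tendsto (fun n => sSup ((fun x => |f x - (I n).eval x|) '' Set.Icc (-1 : ℝ) 1))
      atTop (nhds 0) := by
  have hf' (x : ℝ) : f x = 1 / (1 + 5 ^ 2 * x ^ 2) := by rw [hf]; norm_num
  have hbound : Tendsto (fun n : ℕ => (1 + 5) / ‖aeval ((5⁻¹ : ℝ) * Complex.I) (T ℝ (n + 1))‖)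
      atTop (nhds 0) := by
    refine tendsto_const_nhds.div_atTop ?_
    simp only [aeval_T]
    exact_mod_cast
      (tendsto_norm_eval_T_complex_mul_I (by norm_num)).comp (tendsto_add_atTop_nat 1)
  refine squeeze_zero (fun n => Real.sSup_nonneg ?_) (fun n => Real.sSup_le ?_ ?_) hbound
  · rintro _ ⟨x, -, rfl⟩
    exact abs_nonneg _
  · rintro _ ⟨x, hx, rfl⟩
    simp only [hf']
    exact abs_runge_sub_eval_le (by norm_num) (hdeg n)
      (fun k hk => by rw [hinterp n k hk, hf']) (abs_le.2 hx)
  · positivity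
end
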